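/- arXiv:1707.06416 — 3 statements merged into one kernel-verified Lean document; each statement's English description precedes it below -/
import Mathlib

section
/- Let (B^H_t)_{t≥0} be a fractional Brownian motion with Hurst parameter H ∈ (0, 3/4) on a probability space (Ω, F, P) and let σ > 0. Define U_1(N) = σ³ N^{2H−1/2} Σ_{k=0}^{N−1} ( B^H_{(k+1)/N} − B^H_{k/N} ) ( ((k+1)/N)^{2H} − (k/N)^{2H} ). Then U_1(N) converges to 0 in L²(P) as N → ∞, i.e. E[U_1(N)²] → 0. -/
open MeasureTheory ProbabilityTheory Filter Topology NNReal

/-!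
Write `p = 2H`, `Δₖ = B((k+1)/N) - B(k/N)` and `Dₖ = (k+1)^p - k^p`. Then
`U₁(N) = σ³ N^{-1/2} ∑ₖ Dₖ Δₖ` and `E[Δₖ Δₗ] = ρ(l - k) / N^p`, where `ρ` is the autocovariance of
fractional Gaussian noise, so `E[U₁(N)²] = σ⁶ N^{-1-p} ∑_{k,l<N} Dₖ Dₗ ρ(l - k)`.
Every `Dₖ` is at most `M = 1 + p N^{p-1}`, `∑ₖ Dₖ = N^p` telescopes, and for `r ≥ 1`
`ρ(r) = (D_r - D_{r-1}) / 2` has a sign independent of `r` (concavity or convexity of `x ↦ x^p`),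
so `∑_{|r|<N} |ρ(r)|` telescopes as well and is at most `3 + M`. Hence
`E[U₁(N)²] ≤ σ⁶ M (3 + M) / N`, which tends to `0` because `p - 1 < 1/2`, i.e. `H < 3/4`.
-/

namespace Real

variable {p x : ℝ}

lemma rpow_add_one_sub_rpow_nonneg (hp : 0 ≤ p) (hx : 0 ≤ x) : 0 ≤ (x + 1) ^ p - x ^ p :=
  sub_nonneg.2 (rpow_le_rpow hx (by linarith) hp)

lemma rpow_add_one_sub_rpow_le_one (hp₀ : 0 ≤ p) (hp₁ : p ≤ 1) (hx : 0 ≤ x) :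
    (x + 1) ^ p - x ^ p ≤ 1 := by
  have := rpow_add_le_add_rpow hx zero_le_one hp₀ hp₁
  rw [one_rpow] at this
  linarith

lemma rpow_add_one_sub_rpow_le_mul (hp : 1 ≤ p) (hx : 0 ≤ x) :
    (x + 1) ^ p - x ^ p ≤ p * (x + 1) ^ (p - 1) := by
  have := (convexOn_rpow hp).slope_le_of_hasDerivAt (Set.mem_Ici.2 hx)
    (Set.mem_Ici.2 (by linarith)) (lt_add_one x) (hasDerivAt_rpow_const (Or.inr hp))
  rwa [slope_def_field, add_sub_cancel_left, div_one] at this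

lemma rpow_add_one_sub_rpow_le (hp : 0 ≤ p) (hx : 0 ≤ x) {y : ℝ} (hxy : x + 1 ≤ y) :
    (x + 1) ^ p - x ^ p ≤ 1 + p * y ^ (p - 1) := by
  rcases le_or_gt p 1 with hp₁ | hp₁
  · have : 0 ≤ p * y ^ (p - 1) := mul_nonneg hp (rpow_nonneg (by linarith) _)
    linarith [rpow_add_one_sub_rpow_le_one hp hp₁ hx]
  · calc (x + 1) ^ p - x ^ p ≤ p * (x + 1) ^ (p - 1) := rpow_add_one_sub_rpow_le_mul hp₁.le hx
      _ ≤ p * y ^ (p - 1) := by gcongr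
      _ ≤ 1 + p * y ^ (p - 1) := le_add_of_nonneg_left zero_le_one

lemma rpow_add_one_sub_rpow_le_rpow_add_two_sub (hp : 1 ≤ p) (hx : 0 ≤ x) :
    (x + 1) ^ p - x ^ p ≤ (x + 2) ^ p - (x + 1) ^ p := by
  have := (convexOn_rpow hp).slope_mono_adjacent (Set.mem_Ici.2 hx)
    (Set.mem_Ici.2 (by linarith : (0:ℝ) ≤ x + 2)) (lt_add_one x) (by linarith : x + 1 < x + 2)
  rwa [add_sub_cancel_left, show x + 2 - (x + 1) = 1 by ring, div_one, div_one] at this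

lemma rpow_add_two_sub_rpow_le_rpow_add_one_sub (hp₀ : 0 ≤ p) (hp₁ : p ≤ 1) (hx : 0 ≤ x) :
    (x + 2) ^ p - (x + 1) ^ p ≤ (x + 1) ^ p - x ^ p := by
  have := (concaveOn_rpow hp₀ hp₁).slope_anti_adjacent (Set.mem_Ici.2 hx)
    (Set.mem_Ici.2 (by linarith : (0:ℝ) ≤ x + 2)) (lt_add_one x) (by linarith : x + 1 < x + 2)
  rwa [add_sub_cancel_left, show x + 2 - (x + 1) = 1 by ring, div_one, div_one] at this

lemma rpow_sub_half_mul_div_rpow_sub_div_rpow {N a b : ℝ} (hN : 0 < N) (ha : 0 ≤ a) (hb : 0 ≤ b) :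
    N ^ (p - 1 / 2) * ((a / N) ^ p - (b / N) ^ p) = (a ^ p - b ^ p) / √N := by
  rw [div_rpow ha hN.le, div_rpow hb hN.le, rpow_sub hN, sqrt_eq_rpow]
  field_simp

end Real

open Real Finset

/-- Autocovariance at lag `x` of the unit-step increments of a fractional Brownian motion with
Hurst parameter `p / 2`. -/
noncomputable def fgnAutocov (p x : ℝ) : ℝ := (|x + 1| ^ p + |x - 1| ^ p - 2 * |x| ^ p) / 2

section fgnAutocov

variable {p x : ℝ}

lemma fgnAutocov_neg : fgnAutocov p (-x) = fgnAutocov p x := by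
  rw [fgnAutocov, fgnAutocov, ← abs_neg (-x + 1), ← abs_neg (-x - 1), abs_neg x]
  ring_nf

lemma fgnAutocov_zero (hp : p ≠ 0) : fgnAutocov p 0 = 1 := by
  simp [fgnAutocov, Real.zero_rpow hp]

lemma two_mul_fgnAutocov_add_one (hx : 0 ≤ x) :
    2 * fgnAutocov p (x + 1) = ((x + 2) ^ p - (x + 1) ^ p) - ((x + 1) ^ p - x ^ p) := by
  rw [fgnAutocov, add_sub_cancel_right, abs_of_nonneg hx, abs_of_nonneg (by linarith),
    abs_of_nonneg (by linarith)]
  ring_nf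

lemma two_mul_sum_range_abs_fgnAutocov_le (hp : 0 < p) (n : ℕ) :
    2 * ∑ r ∈ range (n + 1), |fgnAutocov p r| ≤ 3 + (((n : ℝ) + 1) ^ p - (n : ℝ) ^ p) := by
  set D : ℕ → ℝ := fun i => ((i : ℝ) + 1) ^ p - (i : ℝ) ^ p
  have hD₀ : D 0 = 1 := by simp [D, Real.zero_rpow hp.ne']
  have hDn : 0 ≤ D n := rpow_add_one_sub_rpow_nonneg hp.le n.cast_nonneg
  have hstep (i : ℕ) : 2 * |fgnAutocov p ((i + 1 : ℕ) : ℝ)| = |D (i + 1) - D i| := by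
    rw [← abs_two, ← abs_mul, Nat.cast_succ, two_mul_fgnAutocov_add_one i.cast_nonneg]
    simp only [D]
    push_cast
    ring_nf
  rw [sum_range_succ', Nat.cast_zero, fgnAutocov_zero hp.ne', abs_one, mul_add, mul_sum,
    sum_congr rfl fun i _ => hstep i]
  rcases le_or_gt p 1 with hp₁ | hp₁
  · have hanti (i : ℕ) : D (i + 1) ≤ D i := by
      simp only [D]; push_cast
      have := rpow_add_two_sub_rpow_le_rpow_add_one_sub hp.le hp₁ i.cast_nonneg
      ring_nf at this ⊢; linarith
    simp_rw [abs_of_nonpos (sub_nonpos.2 (hanti _)), neg_sub, sum_range_sub', hD₀]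
    linarith
  · have hmono (i : ℕ) : D i ≤ D (i + 1) := by
      simp only [D]; push_cast
      have := rpow_add_one_sub_rpow_le_rpow_add_two_sub hp₁.le i.cast_nonneg
      ring_nf at this ⊢; linarith
    simp_rw [abs_of_nonneg (sub_nonneg.2 (hmono _)), sum_range_sub, hD₀]
    linarith

lemma two_mul_sum_abs_fgnAutocov_le (hp : 0 < p) {N : ℕ} (hN : 0 < N) {M : ℝ}
    (hM : ∀ k < N, ((k : ℝ) + 1) ^ p - (k : ℝ) ^ p ≤ M) :
    2 * ∑ r ∈ range N, |fgnAutocov p r| ≤ 3 + M := by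
  obtain ⟨n, rfl⟩ := Nat.exists_eq_add_one_of_ne_zero hN.ne'
  linarith [two_mul_sum_range_abs_fgnAutocov_le hp n, hM n (lt_add_one n)]

end fgnAutocov

section DoubleSum

variable {g : ℝ → ℝ}

lemma sum_range_abs_comp_sub_le (hg : ∀ x, g (-x) = g x) {N k : ℕ} (hk : k < N) :
    ∑ l ∈ range N, |g (l - k)| ≤ 2 * ∑ r ∈ range N, |g r| := by
  have hsub {m : ℕ} (hm : m ≤ N) : ∑ r ∈ range m, |g r| ≤ ∑ r ∈ range N, |g r| :=
    sum_le_sum_of_subset_of_nonneg (range_subset_range.2 hm) fun _ _ _ => abs_nonneg _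
  have hbelow : ∑ l ∈ range (k + 1), |g (l - k)| ≤ ∑ r ∈ range N, |g r| := by
    rw [← sum_range_reflect]
    refine le_of_eq_of_le (sum_congr rfl fun j hj => ?_) (hsub hk)
    rw [add_tsub_cancel_right, Nat.cast_sub (by simpa [Nat.lt_succ_iff] using hj),
      sub_sub_cancel_left, hg]
  have habove : ∑ l ∈ Ico (k + 1) N, |g (l - k)| ≤ ∑ r ∈ range N, |g r| := by
    rw [sum_Ico_eq_sum_range]
    calc ∑ j ∈ range (N - (k + 1)), |g ((k + 1 + j : ℕ) - k)|
        = ∑ j ∈ range (N - (k + 1)), |g ((j + 1 : ℕ))| := by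
          refine sum_congr rfl fun j _ => ?_
          push_cast; ring_nf
      _ ≤ ∑ j ∈ range (N - (k + 1) + 1), |g j| := by
          rw [sum_range_succ' _ (N - (k + 1))]
          exact le_add_of_nonneg_right (abs_nonneg _)
      _ ≤ ∑ r ∈ range N, |g r| := hsub (by omega)
  rw [← sum_range_add_sum_Ico _ hk]
  linarith

lemma sum_sum_mul_mul_le (hg : ∀ x, g (-x) = g x) {N : ℕ} {c : ℕ → ℝ} {M : ℝ}
    (hc : ∀ k < N, |c k| ≤ M) :
    ∑ k ∈ range N, ∑ l ∈ range N, c k * c l * g (l - k)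
      ≤ M * (∑ k ∈ range N, |c k|) * (2 * ∑ r ∈ range N, |g r|) := by
  rw [mul_comm M, mul_assoc, sum_mul]
  refine sum_le_sum fun k hk => ?_
  have hk := mem_range.1 hk
  calc ∑ l ∈ range N, c k * c l * g (l - k)
      ≤ ∑ l ∈ range N, |c k| * (M * |g (l - k)|) := by
        refine sum_le_sum fun l hl => ?_
        rw [mul_assoc]
        refine (le_abs_self _).trans ?_
        rw [abs_mul, abs_mul]
        gcongr
        exact hc l (mem_range.1 hl)
    _ = |c k| * (M * ∑ l ∈ range N, |g (l - k)|) := by rw [mul_sum, mul_sum]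
    _ ≤ |c k| * (M * (2 * ∑ r ∈ range N, |g r|)) := by
        have : 0 ≤ M := (abs_nonneg _).trans (hc k hk)
        gcongr
        exact sum_range_abs_comp_sub_le hg hk

end DoubleSum

lemma tendsto_add_mul_rpow_div_sqrt {q : ℝ} (hq : q < 1 / 2) (a c : ℝ) :
    Tendsto (fun N : ℕ => (a + c * (N : ℝ) ^ q) / √N) atTop (𝓝 0) := by
  have hsqrt : Tendsto (fun N : ℕ => √(N : ℝ)) atTop atTop :=
    tendsto_sqrt_atTop.comp tendsto_natCast_atTop_atTop
  have hpow : Tendsto (fun N : ℕ => (N : ℝ) ^ (q - 1 / 2)) atTop (𝓝 0) := by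
    have := (tendsto_rpow_neg_atTop (by linarith : 0 < 1 / 2 - q)).comp
      tendsto_natCast_atTop_atTop
    rwa [neg_sub] at this
  have := ((tendsto_const_nhds (x := a)).div_atTop hsqrt).add (hpow.const_mul c)
  rw [zero_add, mul_zero] at this
  refine this.congr' ?_
  filter_upwards [eventually_gt_atTop 0] with N hN
  have hN : (0 : ℝ) < N := Nat.cast_pos.2 hN
  rw [add_div, mul_div_assoc, Real.sqrt_eq_rpow, ← rpow_sub hN]

lemma tendsto_add_mul_rpow_mul_add_mul_rpow_div {q : ℝ} (hq : q < 1 / 2) (a b c : ℝ) :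
    Tendsto (fun N : ℕ => (a + c * (N : ℝ) ^ q) * (b + c * (N : ℝ) ^ q) / N) atTop (𝓝 0) := by
  have := (tendsto_add_mul_rpow_div_sqrt hq a c).mul (tendsto_add_mul_rpow_div_sqrt hq b c)
  rw [mul_zero] at this
  refine this.congr fun N => ?_
  rw [div_mul_div_comm, mul_self_sqrt N.cast_nonneg]

section Integrals

variable {Ω : Type*} [MeasurableSpace Ω] {P : Measure Ω}

lemma integral_sq_sum_mul {ι : Type*} (s : Finset ι) (c : ι → ℝ) {f : ι → Ω → ℝ}
    (hf : ∀ i ∈ s, MemLp (f i) 2 P) :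
    ∫ ω, (∑ i ∈ s, c i * f i ω) ^ 2 ∂P
      = ∑ i ∈ s, ∑ j ∈ s, c i * c j * ∫ ω, f i ω * f j ω ∂P := by
  have hint (i) (hi : i ∈ s) (j) (hj : j ∈ s) : Integrable (fun ω => f i ω * f j ω) P :=
    (hf i hi).integrable_mul (hf j hj)
  simp_rw [sq, sum_mul_sum]
  rw [integral_finsetSum _ fun i hi => integrable_finsetSum _ fun j hj =>
    (hint i hi j hj).const_mul (c i * c j) |>.congr (ae_of_all _ fun ω => by ring)]
  refine sum_congr rfl fun i hi => ?_
  rw [integral_finsetSum _ fun j hj =>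
    (hint i hi j hj).const_mul (c i * c j) |>.congr (ae_of_all _ fun ω => by ring)]
  refine sum_congr rfl fun j _ => ?_
  rw [← integral_const_mul]
  exact integral_congr_ae (ae_of_all _ fun ω => by ring)

structure HasFBmCovariance (P : Measure Ω) (B : ℝ → Ω → ℝ) (p : ℝ) : Prop where
  memLp : ∀ t, 0 ≤ t → MemLp (B t) 2 P
  integral_mul : ∀ s t : ℝ, 0 ≤ s → 0 ≤ t →
    ∫ ω, B s ω * B t ω ∂P = (1/2) * (s ^ p + t ^ p - |t - s| ^ p)

namespace HasFBmCovariance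

variable {B : ℝ → Ω → ℝ} {p : ℝ}

lemma integral_sub_mul_sub (hB : HasFBmCovariance P B p)
    {s₁ s₂ t₁ t₂ : ℝ} (hs₁ : 0 ≤ s₁) (hs₂ : 0 ≤ s₂) (ht₁ : 0 ≤ t₁) (ht₂ : 0 ≤ t₂) :
    ∫ ω, (B s₂ ω - B s₁ ω) * (B t₂ ω - B t₁ ω) ∂P
      = (|t₁ - s₂| ^ p + |t₂ - s₁| ^ p - |t₂ - s₂| ^ p - |t₁ - s₁| ^ p) / 2 := by
  have hint {s t : ℝ} (hs : 0 ≤ s) (ht : 0 ≤ t) : Integrable (fun ω => B s ω * B t ω) P :=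
    (hB.memLp s hs).integrable_mul (hB.memLp t ht)
  simp_rw [sub_mul, mul_sub]
  rw [integral_sub (f := fun ω => B s₂ ω * B t₂ ω - B s₂ ω * B t₁ ω)
      (g := fun ω => B s₁ ω * B t₂ ω - B s₁ ω * B t₁ ω)
      ((hint hs₂ ht₂).sub (hint hs₂ ht₁)) ((hint hs₁ ht₂).sub (hint hs₁ ht₁)),
    integral_sub (hint hs₂ ht₂) (hint hs₂ ht₁), integral_sub (hint hs₁ ht₂) (hint hs₁ ht₁),
    hB.integral_mul _ _ hs₂ ht₂, hB.integral_mul _ _ hs₂ ht₁,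
    hB.integral_mul _ _ hs₁ ht₂, hB.integral_mul _ _ hs₁ ht₁]
  ring

lemma integral_increment_mul_increment (hB : HasFBmCovariance P B p) (N k l : ℕ) :
    ∫ ω, (B ((k + 1) / N) ω - B (k / N) ω) * (B ((l + 1) / N) ω - B (l / N) ω) ∂P
      = fgnAutocov p (l - k) / (N : ℝ) ^ p := by
  have hscale (a b : ℝ) : |a / N - b / N| ^ p = |a - b| ^ p / (N : ℝ) ^ p := by
    rw [← _root_.sub_div, abs_div, Nat.abs_cast, div_rpow (abs_nonneg _) N.cast_nonneg]
  rw [hB.integral_sub_mul_sub (by positivity) (by positivity) (by positivity) (by positivity),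
    hscale, hscale, hscale, hscale, fgnAutocov]
  ring_nf

lemma integral_sq_sum_mul_increment (hB : HasFBmCovariance P B p)
    (N : ℕ) (c : ℕ → ℝ) :
    ∫ ω, (∑ k ∈ range N, c k * (B ((k + 1) / N) ω - B (k / N) ω)) ^ 2 ∂P
      = (∑ k ∈ range N, ∑ l ∈ range N, c k * c l * fgnAutocov p (l - k)) / (N : ℝ) ^ p := by
  rw [integral_sq_sum_mul (f := fun (k : ℕ) ω => B ((k + 1) / N) ω - B (k / N) ω) _ _
    fun k _ => (hB.memLp _ (by positivity)).sub (hB.memLp _ (by positivity)), sum_div]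
  simp_rw [sum_div, hB.integral_increment_mul_increment, mul_div_assoc]

lemma integral_sq_sum_rpow_increment_le (hB : HasFBmCovariance P B p) (hp : 0 < p)
    {N : ℕ} (hN : 0 < N) :
    ∫ ω, (∑ k ∈ range N, (((k : ℝ) + 1) ^ p - (k : ℝ) ^ p) *
        (B ((k + 1) / N) ω - B (k / N) ω)) ^ 2 ∂P
      ≤ (1 + p * (N : ℝ) ^ (p - 1)) * (4 + p * (N : ℝ) ^ (p - 1)) := by
  set M := 1 + p * (N : ℝ) ^ (p - 1)
  have hD (k : ℕ) (hk : k < N) : ((k : ℝ) + 1) ^ p - (k : ℝ) ^ p ≤ M :=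
    rpow_add_one_sub_rpow_le hp.le k.cast_nonneg (by exact_mod_cast hk)
  have hsum : ∑ k ∈ range N, |((k : ℝ) + 1) ^ p - (k : ℝ) ^ p| = (N : ℝ) ^ p := by
    rw [sum_congr rfl fun k _ => abs_of_nonneg (rpow_add_one_sub_rpow_nonneg hp.le k.cast_nonneg)]
    simpa [Real.zero_rpow hp.ne'] using sum_range_sub (fun k : ℕ => (k : ℝ) ^ p) N
  have hNp : 0 < (N : ℝ) ^ p := rpow_pos_of_pos (Nat.cast_pos.2 hN) p
  rw [hB.integral_sq_sum_mul_increment, div_le_iff₀ hNp]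
  calc _ ≤ M * (N : ℝ) ^ p * (2 * ∑ r ∈ range N, |fgnAutocov p r|) := by
        rw [← hsum]
        refine sum_sum_mul_mul_le (fun _ => fgnAutocov_neg) fun k hk => ?_
        rw [abs_of_nonneg (rpow_add_one_sub_rpow_nonneg hp.le k.cast_nonneg)]
        exact hD k hk
    _ ≤ M * (N : ℝ) ^ p * (3 + M) := by
        have : 0 ≤ M := by positivity
        gcongr
        exact two_mul_sum_abs_fgnAutocov_le hp hN hD
    _ = M * (4 + p * (N : ℝ) ^ (p - 1)) * (N : ℝ) ^ p := by ring

end HasFBmCovariance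

end Integrals

theorem cross_term_tendsto_zero_L2_general
    {Ω : Type*} [MeasurableSpace Ω] (P : Measure Ω)
    (H : ℝ) (hH : H ∈ Set.Ioo (0 : ℝ) (3/4))
    (B : ℝ → Ω → ℝ)
    (hGauss : ∀ (n : ℕ) (a : Fin n → ℝ) (t : Fin n → ℝ), (∀ i, 0 ≤ t i) →
      ∃ v : ℝ≥0, P.map (fun ω => ∑ i, a i * B (t i) ω) = gaussianReal 0 v)
    (hCov : ∀ s t : ℝ, 0 ≤ s → 0 ≤ t →
      ∫ ω, B s ω * B t ω ∂P = (1/2) * (s ^ (2*H) + t ^ (2*H) - |t - s| ^ (2*H)))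
    (σ : ℝ)
    (U₁ : ℕ → Ω → ℝ)
    (hU₁ : ∀ (N : ℕ) (ω : Ω), U₁ N ω = σ^3 * (N : ℝ) ^ (2*H - 1/2) *
      ∑ k ∈ Finset.range N,
        (B (((k : ℝ) + 1)/N) ω - B ((k : ℝ)/N) ω) *
          ((((k : ℝ) + 1)/N) ^ (2*H) - ((k : ℝ)/N) ^ (2*H))) :
    Tendsto (fun N : ℕ => ∫ ω, (U₁ N ω)^2 ∂P) atTop (𝓝 0) := by
  have hp : 0 < 2 * H := by linarith [hH.1]
  have hB : HasFBmCovariance P B (2 * H) := by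
    refine ⟨fun t ht => ?_, hCov⟩
    obtain ⟨v, hv⟩ := hGauss 1 (fun _ => 1) (fun _ => t) (fun _ => ht)
    simp only [Fin.sum_univ_one, one_mul] at hv
    exact (⟨by rw [hv]; infer_instance⟩ : HasGaussianLaw (B t) P).memLp_two
  have hq : 2 * H - 1 < 1 / 2 := by linarith [hH.2]
  have hlim := (tendsto_add_mul_rpow_mul_add_mul_rpow_div hq 1 4 (2 * H)).const_mul ((σ ^ 3) ^ 2)
  rw [mul_zero] at hlim
  refine squeeze_zero' (.of_forall fun N => integral_nonneg fun ω => sq_nonneg _) ?_ hlim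
  filter_upwards [eventually_gt_atTop 0] with N hN
  have hN' : (0 : ℝ) < N := Nat.cast_pos.2 hN
  have hU (ω : Ω) : U₁ N ω = σ ^ 3 / √N * ∑ k ∈ range N,
      (((k : ℝ) + 1) ^ (2 * H) - (k : ℝ) ^ (2 * H)) * (B ((k + 1) / N) ω - B (k / N) ω) := by
    rw [hU₁, mul_assoc, div_eq_mul_inv (σ ^ 3), mul_assoc]
    congr 1
    rw [mul_sum, mul_sum]
    refine sum_congr rfl fun k _ => ?_
    rw [mul_left_comm, rpow_sub_half_mul_div_rpow_sub_div_rpow hN' (by positivity) k.cast_nonneg]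
    ring
  simp_rw [hU, mul_pow]
  rw [integral_const_mul, div_pow, sq_sqrt hN'.le]
  calc _ ≤ (σ ^ 3) ^ 2 / N *
        ((1 + 2 * H * (N : ℝ) ^ (2 * H - 1)) * (4 + 2 * H * (N : ℝ) ^ (2 * H - 1))) := by
        gcongr
        exact hB.integral_sq_sum_rpow_increment_le hp hN
    _ = _ := by ring

/-- The drift-correction cross term in the quadratic variation of a
geometric fractional Brownian motion converges to 0 in L²(P). -/
theorem cross_term_tendsto_zero_L2
    {Ω : Type*} [MeasurableSpace Ω] (P : Measure Ω) [IsProbabilityMeasure P]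
    (H : ℝ) (hH : H ∈ Set.Ioo (0 : ℝ) (3/4))
    (B : ℝ → Ω → ℝ)
    (hGauss : ∀ (n : ℕ) (a : Fin n → ℝ) (t : Fin n → ℝ), (∀ i, 0 ≤ t i) →
      ∃ v : ℝ≥0, P.map (fun ω => ∑ i, a i * B (t i) ω) = gaussianReal 0 v)
    (hCov : ∀ s t : ℝ, 0 ≤ s → 0 ≤ t →
      ∫ ω, B s ω * B t ω ∂P = (1/2) * (s ^ (2*H) + t ^ (2*H) - |t - s| ^ (2*H)))
    (σ : ℝ) (hσ : 0 < σ)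
    (U₁ : ℕ → Ω → ℝ)
    (hU₁ : ∀ (N : ℕ) (ω : Ω), U₁ N ω = σ^3 * (N : ℝ) ^ (2*H - 1/2) *
      ∑ k ∈ Finset.range N,
        (B (((k : ℝ) + 1)/N) ω - B ((k : ℝ)/N) ω) *
          ((((k : ℝ) + 1)/N) ^ (2*H) - ((k : ℝ)/N) ^ (2*H))) :
    Tendsto (fun N : ℕ => ∫ ω, (U₁ N ω)^2 ∂P) atTop (𝓝 0) :=
  cross_term_tendsto_zero_L2_general P H hH B hGauss hCov σ U₁ hU₁
end

section
/- Let H ∈ (0, 3/4) and σ > 0. Define U_2(N) = (σ⁴/4) N^{2H−1/2} Σ_{k=0}^{N−1} ( ((k+1)/N)^{2H} − (k/N)^{2H} )². Then U_2(N) → 0 as N → ∞. -/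
/-!
The increments `d_k = ((k+1)/N)^a - (k/N)^a` with `a = 2H` are nonnegative and telescope to `1`,
so `∑ d_k² ≤ max_k d_k`. By subadditivity of `t ↦ t^a` (for `a ≤ 1`) or its Lipschitz bound on
`[0, 1]` (for `a ≥ 1`), every increment is at most `max 1 a * N^(-min a 1)`. Hence the term is
`O(N^(a - 1/2 - min a 1))`, and the exponent is negative exactly because `a < 3/2`.
-/

open Filter Topology Finset

namespace Real

lemma rpow_sub_rpow_le_sub_rpow {a x y : ℝ} (ha0 : 0 ≤ a) (ha1 : a ≤ 1) (hx : 0 ≤ x)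
    (hxy : x ≤ y) : y ^ a - x ^ a ≤ (y - x) ^ a := by
  have := rpow_add_le_add_rpow hx (sub_nonneg.2 hxy) ha0 ha1
  rw [add_sub_cancel] at this
  linarith

lemma rpow_sub_rpow_le_mul_sub {a x y : ℝ} (ha : 1 ≤ a) (hx : 0 ≤ x) (hxy : x ≤ y)
    (hy : y ≤ 1) : y ^ a - x ^ a ≤ a * (y - x) := by
  have hderiv : ∀ t ∈ Set.Icc (0 : ℝ) 1,
      HasDerivWithinAt (fun t : ℝ => t ^ a) (a * t ^ (a - 1)) (Set.Icc 0 1) t :=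
    fun _ _ => (hasDerivAt_rpow_const (Or.inr ha)).hasDerivWithinAt
  have hbound : ∀ t ∈ Set.Icc (0 : ℝ) 1, ‖a * t ^ (a - 1)‖ ≤ a := by
    intro t ht
    have h1 : t ^ (a - 1) ≤ 1 := rpow_le_one ht.1 ht.2 (by linarith)
    rw [norm_of_nonneg (by have := rpow_nonneg ht.1 (a - 1); positivity)]
    nlinarith
  have := (convex_Icc (0 : ℝ) 1).norm_image_sub_le_of_norm_hasDerivWithin_le hderiv hbound
    ⟨hx, hxy.trans hy⟩ ⟨hx.trans hxy, hy⟩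
  rw [norm_of_nonneg (sub_nonneg.2 hxy)] at this
  exact (le_abs_self _).trans this

end Real

lemma Finset.sum_sq_le_of_sum_eq_one {ι : Type*} {s : Finset ι} {f : ι → ℝ} {B : ℝ}
    (hf : ∀ i ∈ s, 0 ≤ f i) (hB : ∀ i ∈ s, f i ≤ B) (hsum : ∑ i ∈ s, f i = 1) :
    ∑ i ∈ s, f i ^ 2 ≤ B :=
  calc ∑ i ∈ s, f i ^ 2
      ≤ ∑ i ∈ s, B * f i := sum_le_sum fun i hi => by
        rw [sq]; exact mul_le_mul_of_nonneg_right (hB i hi) (hf i hi)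
    _ = B := by rw [← mul_sum, hsum, mul_one]

lemma tendsto_zero_of_le_mul_rpow {u : ℕ → ℝ} {C c : ℝ} (hc : c < 0) (hu : ∀ N, 0 ≤ u N)
    (hle : ∀ᶠ N in atTop, u N ≤ C * (N : ℝ) ^ c) : Tendsto u atTop (𝓝 0) := by
  have hpow := (tendsto_rpow_neg_atTop (neg_pos.2 hc)).comp tendsto_natCast_atTop_atTop
  rw [neg_neg] at hpow
  exact squeeze_zero' (Eventually.of_forall hu) hle (by simpa using hpow.const_mul C)

noncomputable def gridIncrement (a : ℝ) (N k : ℕ) : ℝ :=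
  (((k : ℝ) + 1) / N) ^ a - ((k : ℝ) / N) ^ a

section gridIncrement

variable {a : ℝ} {N k : ℕ}

lemma gridIncrement_nonneg (ha : 0 ≤ a) : 0 ≤ gridIncrement a N k :=
  sub_nonneg.2 (Real.rpow_le_rpow (by positivity) (by gcongr; linarith) ha)

lemma sum_gridIncrement (ha : a ≠ 0) (hN : N ≠ 0) : ∑ k ∈ range N, gridIncrement a N k = 1 := by
  have := sum_range_sub (fun k : ℕ => ((k : ℝ) / N) ^ a) N
  simp only [Nat.cast_add, Nat.cast_one] at this
  simp only [gridIncrement]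
  rw [this, div_self (Nat.cast_ne_zero.2 hN), Nat.cast_zero, zero_div,
    Real.zero_rpow ha, Real.one_rpow, sub_zero]

lemma gridIncrement_le_rpow_neg (ha0 : 0 ≤ a) (ha1 : a ≤ 1) :
    gridIncrement a N k ≤ (N : ℝ) ^ (-a) := by
  have := Real.rpow_sub_rpow_le_sub_rpow ha0 ha1 (by positivity : (0 : ℝ) ≤ k / N)
    (by gcongr; linarith : (k : ℝ) / N ≤ (k + 1) / N)
  rwa [← sub_div, add_sub_cancel_left, one_div, Real.inv_rpow (Nat.cast_nonneg N),
    ← Real.rpow_neg (Nat.cast_nonneg N)] at this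

lemma gridIncrement_le_mul_inv (ha : 1 ≤ a) (hk : k < N) :
    gridIncrement a N k ≤ a * (N : ℝ)⁻¹ := by
  have hN : (0 : ℝ) < N := by exact_mod_cast (Nat.zero_le k).trans_lt hk
  have hkN : (k : ℝ) + 1 ≤ N := by exact_mod_cast hk
  have := Real.rpow_sub_rpow_le_mul_sub ha (by positivity : (0 : ℝ) ≤ k / N)
    (by gcongr; linarith : (k : ℝ) / N ≤ (k + 1) / N) ((div_le_one hN).2 hkN)
  rwa [← sub_div, add_sub_cancel_left, one_div] at this

lemma sum_sq_gridIncrement_le (ha : 0 < a) (hN : N ≠ 0) :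
    ∑ k ∈ range N, gridIncrement a N k ^ 2 ≤ max 1 a * (N : ℝ) ^ (-min a 1) := by
  refine sum_sq_le_of_sum_eq_one (fun _ _ => gridIncrement_nonneg ha.le) (fun k hk => ?_)
    (sum_gridIncrement ha.ne' hN)
  rcases le_total a 1 with h | h
  · rw [max_eq_left h, min_eq_left h, one_mul]
    exact gridIncrement_le_rpow_neg ha.le h
  · rw [max_eq_right h, min_eq_right h, Real.rpow_neg_one]
    exact gridIncrement_le_mul_inv h (mem_range.1 hk)

end gridIncrement

theorem deterministic_term_tendsto_zero_general
    (H : ℝ) (hH : H ∈ Set.Ioo (0 : ℝ) (3/4)) (σ : ℝ) :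
    Tendsto (fun N : ℕ => σ^4/4 * (N : ℝ) ^ (2*H - 1/2) *
        ∑ k ∈ Finset.range N,
          ((((k : ℝ) + 1)/N) ^ (2*H) - ((k : ℝ)/N) ^ (2*H))^2)
      atTop (𝓝 0) := by
  obtain ⟨hH0, hH1⟩ := hH
  refine tendsto_zero_of_le_mul_rpow (C := σ ^ 4 / 4 * max 1 (2 * H))
    (sub_neg.2 (lt_min (by linarith) (by linarith) : 2 * H - 1 / 2 < min (2 * H) 1))
    (fun N => by positivity) ?_
  filter_upwards [eventually_ne_atTop 0] with N hN
  have hNpos : (0 : ℝ) < N := by exact_mod_cast Nat.pos_of_ne_zero hN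
  calc σ ^ 4 / 4 * (N : ℝ) ^ (2 * H - 1 / 2) * ∑ k ∈ range N, gridIncrement (2 * H) N k ^ 2
      ≤ σ ^ 4 / 4 * (N : ℝ) ^ (2 * H - 1 / 2) * (max 1 (2 * H) * (N : ℝ) ^ (-min (2 * H) 1)) := by
        gcongr
        exact sum_sq_gridIncrement_le (by linarith) hN
    _ = σ ^ 4 / 4 * max 1 (2 * H) * (N : ℝ) ^ (2 * H - 1 / 2 - min (2 * H) 1) := by
        rw [sub_eq_add_neg _ (min _ _), Real.rpow_add hNpos]
        ring

/-- The deterministic correction term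
U₂(N) = (σ⁴/4) N^{2H−1/2} Σ_{k=0}^{N−1} ( ((k+1)/N)^{2H} − (k/N)^{2H} )² tends to 0. -/
theorem deterministic_term_tendsto_zero
    (H : ℝ) (hH : H ∈ Set.Ioo (0 : ℝ) (3/4)) (σ : ℝ) (hσ : 0 < σ) :
    Tendsto (fun N : ℕ => σ^4/4 * (N : ℝ) ^ (2*H - 1/2) *
        ∑ k ∈ Finset.range N,
          ((((k : ℝ) + 1)/N) ^ (2*H) - ((k : ℝ)/N) ^ (2*H))^2)
      atTop (𝓝 0) :=
  deterministic_term_tendsto_zero_general H hH σ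
end

section
/- Let H ∈ (1/2, 3/4), let Σ > 0 and let σ : [0,1] → ℝ be measurable with 0 ≤ σ(t) ≤ Σ. For N ≥ 1 and 0 ≤ k ≤ N−1 define δ_k = H(2H−1) [ ∫_0^{(k+1)/N} ∫_0^{(k+1)/N} σ(s) σ(t) |s − t|^{2H−2} ds dt − ∫_0^{k/N} ∫_0^{k/N} σ(s) σ(t) |s − t|^{2H−2} ds dt ]. Then N^{2H−1/2} Σ_{k=0}^{N−1} δ_k² → 0 as N → ∞. -/
open MeasureTheory Filter Topology Set intervalIntegral

/-!
Write `p = 2H - 2 ∈ (-1, 0)` and `V(b) = ∫₀ᵇ∫₀ᵇ σ(s)σ(t)|s-t|^p dt ds`. The increment `V(b) - V(a)`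
splits into the strip `s ∈ [a, b]`, where the inner integral is uniformly bounded by `2Λ²/(p+1)`,
and the cross region `s < a ≤ t`, where `|s-t|^p ≤ (a-s)^p` is integrable in `s`. Hence `V` is
Lipschitz on `[0, 1]`, every `δ_k` is `O(1/N)`, and `N^(2H-1/2) ∑ δ_k² = O(N^(2H-3/2)) → 0`
because `H < 3/4`.
-/

lemma intervalIntegrable_abs_rpow {p : ℝ} (hp : -1 < p) (a b : ℝ) :
    IntervalIntegrable (fun u : ℝ => |u| ^ p) volume a b := by
  have h_nonneg : ∀ c : ℝ, 0 ≤ c → IntervalIntegrable (fun u : ℝ => |u| ^ p) volume 0 c :=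
    fun c hc => (intervalIntegrable_rpow' hp).congr fun u hu => by
      rw [uIoc_of_le hc] at hu
      rw [abs_of_pos hu.1]
  have h_from_zero : ∀ c : ℝ, IntervalIntegrable (fun u : ℝ => |u| ^ p) volume 0 c := by
    intro c
    rcases le_total 0 c with hc | hc
    · exact h_nonneg c hc
    · rw [IntervalIntegrable.iff_comp_neg]
      simpa using h_nonneg (-c) (neg_nonneg.2 hc)
  exact (h_from_zero a).symm.trans (h_from_zero b)

lemma intervalIntegrable_abs_sub_rpow {p : ℝ} (hp : -1 < p) (s a b : ℝ) :
    IntervalIntegrable (fun t : ℝ => |s - t| ^ p) volume a b := by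
  simpa [abs_sub_comm] using (intervalIntegrable_abs_rpow hp (a - s) (b - s)).comp_sub_right s

lemma integral_abs_rpow_neg_one_one {p : ℝ} (hp : -1 < p) :
    ∫ u in (-1 : ℝ)..1, |u| ^ p = 2 / (p + 1) := by
  have h_right : ∫ u in (0 : ℝ)..1, |u| ^ p = 1 / (p + 1) := by
    have h_congr : EqOn (fun u : ℝ => |u| ^ p) (fun u => u ^ p) (uIcc 0 1) := fun u hu => by
      rw [uIcc_of_le zero_le_one] at hu
      simp only [abs_of_nonneg hu.1]
    rw [integral_congr h_congr, integral_rpow (Or.inl hp), Real.one_rpow,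
      Real.zero_rpow (by linarith)]
    ring
  have h_left : ∫ u in (-1 : ℝ)..0, |u| ^ p = 1 / (p + 1) := by
    have h := integral_comp_neg (a := (0 : ℝ)) (b := 1) fun u : ℝ => |u| ^ p
    simp only [abs_neg, neg_zero] at h
    rw [← h, h_right]
  rw [← integral_add_adjacent_intervals (intervalIntegrable_abs_rpow hp (-1) 0)
    (intervalIntegrable_abs_rpow hp 0 1), h_left, h_right]
  ring

lemma integral_abs_sub_rpow_le {p s a b : ℝ} (hp : -1 < p) (hab : a ≤ b) (ha : s - 1 ≤ a)
    (hb : b ≤ s + 1) : ∫ t in a..b, |s - t| ^ p ≤ 2 / (p + 1) := by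
  simp_rw [abs_sub_comm s]
  rw [integral_comp_sub_right (fun u : ℝ => |u| ^ p), ← integral_abs_rpow_neg_one_one hp]
  exact integral_mono_interval (by linarith) (by linarith) (by linarith)
    (Eventually.of_forall fun u => by positivity) (intervalIntegrable_abs_rpow hp _ _)

lemma integral_abs_sub_rpow_le_of_lt {p s a b : ℝ} (hp : p ≤ 0) (hsa : s < a) (hab : a ≤ b) :
    ∫ t in a..b, |s - t| ^ p ≤ (a - s) ^ p * (b - a) := by
  calc ∫ t in a..b, |s - t| ^ p ≤ ‖∫ t in a..b, |s - t| ^ p‖ := le_abs_self _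
    _ ≤ (a - s) ^ p * |b - a| := by
      refine intervalIntegral.norm_integral_le_of_norm_le_const fun t ht => ?_
      rw [uIoc_of_le hab] at ht
      rw [Real.norm_eq_abs, abs_of_nonneg (by positivity), abs_sub_comm,
        abs_of_pos (by linarith [ht.1])]
      exact Real.rpow_le_rpow_of_nonpos (by linarith) (by linarith [ht.1]) hp
    _ = (a - s) ^ p * (b - a) := by rw [abs_of_nonneg (sub_nonneg.2 hab)]

lemma MeasureTheory.StronglyMeasurable.intervalIntegral_prod_right {f : ℝ → ℝ → ℝ}
    (hf : StronglyMeasurable (Function.uncurry f)) (a b : ℝ) :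
    StronglyMeasurable fun s => ∫ t in a..b, f s t :=
  (hf.integral_prod_right (ν := volume.restrict (Ioc a b))).sub
    (hf.integral_prod_right (ν := volume.restrict (Ioc b a)))

lemma tendsto_rpow_mul_sum_sq_of_abs_le {r C : ℝ} (hr : r < 1) (x : ℕ → ℕ → ℝ)
    (hx : ∀ N k, k < N → |x N k| ≤ C / N) :
    Tendsto (fun N : ℕ => (N : ℝ) ^ r * ∑ k ∈ Finset.range N, x N k ^ 2) atTop (𝓝 0) := by
  have h_bound : ∀ N : ℕ, 1 ≤ N →
      (N : ℝ) ^ r * ∑ k ∈ Finset.range N, x N k ^ 2 ≤ C ^ 2 * (N : ℝ) ^ (r - 1) := by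
    intro N hN
    have hN : (0 : ℝ) < N := by exact_mod_cast hN
    have h_sum : ∑ k ∈ Finset.range N, x N k ^ 2 ≤ N * (C / N) ^ 2 := by
      simpa using Finset.sum_le_card_nsmul _ _ _ fun k hk =>
        sq_le_sq' (abs_le.1 (hx N k (Finset.mem_range.1 hk))).1
          (abs_le.1 (hx N k (Finset.mem_range.1 hk))).2
    calc (N : ℝ) ^ r * ∑ k ∈ Finset.range N, x N k ^ 2
        ≤ (N : ℝ) ^ r * (N * (C / N) ^ 2) := by gcongr
      _ = C ^ 2 * (N : ℝ) ^ (r - 1) := by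
        rw [Real.rpow_sub hN, Real.rpow_one]
        field_simp
  have h_lim : Tendsto (fun N : ℕ => C ^ 2 * (N : ℝ) ^ (r - 1)) atTop (𝓝 0) := by
    simpa using ((tendsto_rpow_neg_atTop (by linarith : 0 < 1 - r)).comp
      tendsto_natCast_atTop_atTop).const_mul (C ^ 2)
  exact squeeze_zero' (Eventually.of_forall fun N => by positivity)
    (eventually_atTop.2 ⟨1, h_bound⟩) h_lim

/-- `H (2H - 1) * rieszEnergy σ (2H - 2) b` is the variance of `∫₀ᵇ σ dB^H`. -/
noncomputable def rieszEnergy (σ : ℝ → ℝ) (p b : ℝ) : ℝ :=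
  ∫ s in (0 : ℝ)..b, ∫ t in (0 : ℝ)..b, σ s * σ t * |s - t| ^ p

section BoundedWeight

variable {σ : ℝ → ℝ} {p Λ : ℝ}

lemma abs_mul_mul_abs_sub_rpow_le (hσ : ∀ t ∈ Icc (0 : ℝ) 1, |σ t| ≤ Λ) {s t : ℝ}
    (hs : s ∈ Icc (0 : ℝ) 1) (ht : t ∈ Icc (0 : ℝ) 1) :
    |σ s * σ t * |s - t| ^ p| ≤ Λ ^ 2 * |s - t| ^ p := by
  rw [abs_mul, abs_mul, abs_of_nonneg (by positivity : (0 : ℝ) ≤ |s - t| ^ p), sq]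
  gcongr
  · exact (abs_nonneg _).trans (hσ s hs)
  · exact hσ s hs
  · exact hσ t ht

lemma intervalIntegrable_kernel (hp : -1 < p) (hσm : Measurable σ)
    (hσ : ∀ t ∈ Icc (0 : ℝ) 1, |σ t| ≤ Λ) {s c d : ℝ} (hs : s ∈ Icc (0 : ℝ) 1) (hc : 0 ≤ c)
    (hcd : c ≤ d) (hd : d ≤ 1) :
    IntervalIntegrable (fun t => σ s * σ t * |s - t| ^ p) volume c d := by
  refine ((intervalIntegrable_abs_sub_rpow hp s c d).const_mul (Λ ^ 2)).mono_fun'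
    (by fun_prop) ?_
  rw [uIoc_of_le hcd]
  filter_upwards [ae_restrict_mem measurableSet_Ioc] with t ht
  exact abs_mul_mul_abs_sub_rpow_le hσ hs ⟨hc.trans ht.1.le, ht.2.trans hd⟩

lemma abs_integral_kernel_le (hp : -1 < p) (hσ : ∀ t ∈ Icc (0 : ℝ) 1, |σ t| ≤ Λ) {s c d : ℝ}
    (hs : s ∈ Icc (0 : ℝ) 1) (hc : 0 ≤ c) (hcd : c ≤ d) (hd : d ≤ 1) :
    |∫ t in c..d, σ s * σ t * |s - t| ^ p| ≤ Λ ^ 2 * ∫ t in c..d, |s - t| ^ p := by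
  rw [← intervalIntegral.integral_const_mul, ← Real.norm_eq_abs]
  refine norm_integral_le_of_norm_le hcd (Eventually.of_forall fun t ht => ?_)
    ((intervalIntegrable_abs_sub_rpow hp s c d).const_mul _)
  exact abs_mul_mul_abs_sub_rpow_le hσ hs ⟨hc.trans ht.1.le, ht.2.trans hd⟩

lemma abs_integral_kernel_le_two_div (hp : -1 < p) (hσ : ∀ t ∈ Icc (0 : ℝ) 1, |σ t| ≤ Λ)
    {s c d : ℝ} (hs : s ∈ Icc (0 : ℝ) 1) (hc : 0 ≤ c) (hcd : c ≤ d) (hd : d ≤ 1) :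
    |∫ t in c..d, σ s * σ t * |s - t| ^ p| ≤ Λ ^ 2 * (2 / (p + 1)) :=
  (abs_integral_kernel_le hp hσ hs hc hcd hd).trans <| mul_le_mul_of_nonneg_left
    (integral_abs_sub_rpow_le hp hcd (by linarith [hs.2]) (by linarith [hs.1])) (sq_nonneg Λ)

lemma intervalIntegrable_integral_kernel (hp : -1 < p) (hσm : Measurable σ)
    (hσ : ∀ t ∈ Icc (0 : ℝ) 1, |σ t| ≤ Λ) {c d x y : ℝ} (hc : 0 ≤ c) (hcd : c ≤ d) (hd : d ≤ 1)
    (hx : 0 ≤ x) (hxy : x ≤ y) (hy : y ≤ 1) :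
    IntervalIntegrable (fun s => ∫ t in c..d, σ s * σ t * |s - t| ^ p) volume x y := by
  have hm : Measurable (Function.uncurry fun s t : ℝ => σ s * σ t * |s - t| ^ p) := by fun_prop
  refine (intervalIntegrable_const (c := Λ ^ 2 * (2 / (p + 1)))).mono_fun'
    (hm.stronglyMeasurable.intervalIntegral_prod_right c d).aestronglyMeasurable ?_
  rw [uIoc_of_le hxy]
  filter_upwards [ae_restrict_mem measurableSet_Ioc] with s hs
  exact abs_integral_kernel_le_two_div hp hσ ⟨hx.trans hs.1.le, hs.2.trans hy⟩ hc hcd hd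

lemma rieszEnergy_sub_eq (hp : -1 < p) (hσm : Measurable σ)
    (hσ : ∀ t ∈ Icc (0 : ℝ) 1, |σ t| ≤ Λ) {a b : ℝ} (ha : 0 ≤ a) (hab : a ≤ b) (hb : b ≤ 1) :
    rieszEnergy σ p b - rieszEnergy σ p a =
      (∫ s in a..b, ∫ t in (0 : ℝ)..b, σ s * σ t * |s - t| ^ p) +
        ∫ s in (0 : ℝ)..a, ∫ t in a..b, σ s * σ t * |s - t| ^ p := by
  have ha1 : a ≤ 1 := hab.trans hb
  have hb0 : 0 ≤ b := ha.trans hab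
  have h_rows : ∫ s in (0 : ℝ)..b, ∫ t in (0 : ℝ)..b, σ s * σ t * |s - t| ^ p =
      (∫ s in (0 : ℝ)..a, ∫ t in (0 : ℝ)..b, σ s * σ t * |s - t| ^ p) +
        ∫ s in a..b, ∫ t in (0 : ℝ)..b, σ s * σ t * |s - t| ^ p :=
    (integral_add_adjacent_intervals
      (intervalIntegrable_integral_kernel hp hσm hσ le_rfl hb0 hb le_rfl ha ha1)
      (intervalIntegrable_integral_kernel hp hσm hσ le_rfl hb0 hb ha hab hb)).symm
  have h_columns : ∫ s in (0 : ℝ)..a, ∫ t in (0 : ℝ)..b, σ s * σ t * |s - t| ^ p =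
      ∫ s in (0 : ℝ)..a, ((∫ t in (0 : ℝ)..a, σ s * σ t * |s - t| ^ p) +
        ∫ t in a..b, σ s * σ t * |s - t| ^ p) := by
    refine integral_congr fun s hs => ?_
    rw [uIcc_of_le ha] at hs
    have hs1 : s ∈ Icc (0 : ℝ) 1 := ⟨hs.1, hs.2.trans ha1⟩
    exact (integral_add_adjacent_intervals (intervalIntegrable_kernel hp hσm hσ hs1 le_rfl ha ha1)
      (intervalIntegrable_kernel hp hσm hσ hs1 ha hab hb)).symm
  rw [rieszEnergy, rieszEnergy, h_rows, h_columns,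
    integral_add (intervalIntegrable_integral_kernel hp hσm hσ le_rfl ha ha1 le_rfl ha ha1)
      (intervalIntegrable_integral_kernel hp hσm hσ ha hab hb le_rfl ha ha1)]
  ring

lemma abs_integral_cross_kernel_le (hp : -1 < p) (hp0 : p ≤ 0)
    (hσ : ∀ t ∈ Icc (0 : ℝ) 1, |σ t| ≤ Λ) {a b : ℝ} (ha : 0 ≤ a) (hab : a ≤ b) (hb : b ≤ 1) :
    |∫ s in (0 : ℝ)..a, ∫ t in a..b, σ s * σ t * |s - t| ^ p| ≤ Λ ^ 2 * (b - a) / (p + 1) := by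
  have hq : 0 < p + 1 := by linarith
  have h_pointwise : ∀ᵐ s, s ∈ Ioc 0 a →
      ‖∫ t in a..b, σ s * σ t * |s - t| ^ p‖ ≤ Λ ^ 2 * (b - a) * (a - s) ^ p := by
    filter_upwards [(countable_singleton a).ae_notMem volume] with s hs_ne hs
    have hsa : s < a := lt_of_le_of_ne hs.2 hs_ne
    calc ‖∫ t in a..b, σ s * σ t * |s - t| ^ p‖
        ≤ Λ ^ 2 * ∫ t in a..b, |s - t| ^ p :=
          abs_integral_kernel_le hp hσ ⟨hs.1.le, hs.2.trans (hab.trans hb)⟩ ha hab hb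
      _ ≤ Λ ^ 2 * ((a - s) ^ p * (b - a)) := by
          gcongr; exact integral_abs_sub_rpow_le_of_lt hp0 hsa hab
      _ = Λ ^ 2 * (b - a) * (a - s) ^ p := by ring
  have h_integrable : IntervalIntegrable (fun s => Λ ^ 2 * (b - a) * (a - s) ^ p) volume 0 a := by
    simpa using (((intervalIntegrable_rpow' (a := 0) (b := a) hp).comp_sub_left a).const_mul
      (Λ ^ 2 * (b - a))).symm
  calc |∫ s in (0 : ℝ)..a, ∫ t in a..b, σ s * σ t * |s - t| ^ p|
      ≤ ∫ s in (0 : ℝ)..a, Λ ^ 2 * (b - a) * (a - s) ^ p :=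
        norm_integral_le_of_norm_le ha h_pointwise h_integrable
    _ = Λ ^ 2 * (b - a) * (a ^ (p + 1) / (p + 1)) := by
        rw [intervalIntegral.integral_const_mul, integral_comp_sub_left (fun u => u ^ p),
          integral_rpow (Or.inl hp), sub_zero, sub_self, Real.zero_rpow hq.ne', sub_zero]
    _ ≤ Λ ^ 2 * (b - a) * (1 / (p + 1)) := by
        gcongr
        exact Real.rpow_le_one ha (hab.trans hb) hq.le
    _ = Λ ^ 2 * (b - a) / (p + 1) := by ring

lemma abs_rieszEnergy_sub_le (hp : -1 < p) (hp0 : p ≤ 0) (hσm : Measurable σ)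
    (hσ : ∀ t ∈ Icc (0 : ℝ) 1, |σ t| ≤ Λ) {a b : ℝ} (ha : 0 ≤ a) (hab : a ≤ b) (hb : b ≤ 1) :
    |rieszEnergy σ p b - rieszEnergy σ p a| ≤ 3 * Λ ^ 2 / (p + 1) * (b - a) := by
  have h_rows : |∫ s in a..b, ∫ t in (0 : ℝ)..b, σ s * σ t * |s - t| ^ p| ≤
      Λ ^ 2 * (2 / (p + 1)) * (b - a) := by
    have h := intervalIntegral.norm_integral_le_of_norm_le_const fun s hs =>
      (Real.norm_eq_abs _).trans_le <| abs_integral_kernel_le_two_div hp hσ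
        (uIoc_subset_uIcc.trans (uIcc_subset_Icc ⟨ha, hab.trans hb⟩ ⟨ha.trans hab, hb⟩) hs)
        le_rfl (ha.trans hab) hb
    rwa [abs_of_nonneg (sub_nonneg.2 hab)] at h
  rw [rieszEnergy_sub_eq hp hσm hσ ha hab hb]
  calc _ ≤ _ := abs_add_le _ _
    _ ≤ Λ ^ 2 * (2 / (p + 1)) * (b - a) + Λ ^ 2 * (b - a) / (p + 1) :=
        add_le_add h_rows (abs_integral_cross_kernel_le hp hp0 hσ ha hab hb)
    _ = 3 * Λ ^ 2 / (p + 1) * (b - a) := by ring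

end BoundedWeight

theorem delta_sq_sum_tendsto_zero_general
    (H : ℝ) (hH : H ∈ Set.Ioo (1/2 : ℝ) (3/4))
    (Λ : ℝ)
    (σ : ℝ → ℝ) (hσmeas : Measurable σ)
    (hσbd : ∀ t ∈ Set.Icc (0:ℝ) 1, 0 ≤ σ t ∧ σ t ≤ Λ)
    (δ : ℕ → ℕ → ℝ)
    (hδ : ∀ N k : ℕ, δ N k = H * (2*H - 1) *
      ((∫ s in (0:ℝ)..(((k : ℝ) + 1)/N),
          ∫ t in (0:ℝ)..(((k : ℝ) + 1)/N), σ s * σ t * |s - t| ^ (2*H - 2)) -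
        ∫ s in (0:ℝ)..((k : ℝ)/N),
          ∫ t in (0:ℝ)..((k : ℝ)/N), σ s * σ t * |s - t| ^ (2*H - 2))) :
    Tendsto (fun N : ℕ => (N : ℝ) ^ (2*H - 1/2) * ∑ k ∈ Finset.range N, (δ N k)^2)
      atTop (𝓝 0) := by
  obtain ⟨hH₁, hH₂⟩ := hH
  have hσ : ∀ t ∈ Icc (0 : ℝ) 1, |σ t| ≤ Λ := fun t ht =>
    abs_le.2 ⟨by linarith [hσbd t ht], (hσbd t ht).2⟩
  refine tendsto_rpow_mul_sum_sq_of_abs_le (C := 3 * H * Λ ^ 2) (by linarith) δ fun N k hk => ?_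
  have hN : (0 : ℝ) < N := by exact_mod_cast k.zero_le.trans_lt hk
  have h_step : ((k : ℝ) + 1) / N - k / N = 1 / N := by ring
  have h_exponent : 2 * H - 2 + 1 = 2 * H - 1 := by ring
  have h_increment := abs_rieszEnergy_sub_le (p := 2 * H - 2) (a := k / N) (b := (k + 1) / N)
    (by linarith) (by linarith) hσmeas hσ (by positivity) (by gcongr; linarith)
    ((div_le_one hN).2 (by exact_mod_cast hk))
  rw [h_step, h_exponent] at h_increment
  calc |δ N k| = H * (2 * H - 1) * |rieszEnergy σ (2 * H - 2) ((k + 1) / N) -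
        rieszEnergy σ (2 * H - 2) (k / N)| := by
        rw [hδ, abs_mul, abs_of_pos (by nlinarith : 0 < H * (2 * H - 1))]
        rfl
    _ ≤ H * (2 * H - 1) * (3 * Λ ^ 2 / (2 * H - 1) * (1 / N)) := by
        gcongr
        nlinarith
    _ = 3 * H * Λ ^ 2 / N * ((2 * H - 1) / (2 * H - 1)) := by ring
    _ = 3 * H * Λ ^ 2 / N := by rw [div_self (by linarith), mul_one]

/-- The deterministic term N^{2H−1/2} Σ_k δ_k² built from the
variance increments of the time-varying volatility model tends to 0. -/
theorem delta_sq_sum_tendsto_zero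
    (H : ℝ) (hH : H ∈ Set.Ioo (1/2 : ℝ) (3/4))
    (Λ : ℝ) (hΛ : 0 < Λ)
    (σ : ℝ → ℝ) (hσmeas : Measurable σ)
    (hσbd : ∀ t ∈ Set.Icc (0:ℝ) 1, 0 ≤ σ t ∧ σ t ≤ Λ)
    (δ : ℕ → ℕ → ℝ)
    (hδ : ∀ N k : ℕ, δ N k = H * (2*H - 1) *
      ((∫ s in (0:ℝ)..(((k : ℝ) + 1)/N),
          ∫ t in (0:ℝ)..(((k : ℝ) + 1)/N), σ s * σ t * |s - t| ^ (2*H - 2)) -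
        ∫ s in (0:ℝ)..((k : ℝ)/N),
          ∫ t in (0:ℝ)..((k : ℝ)/N), σ s * σ t * |s - t| ^ (2*H - 2))) :
    Tendsto (fun N : ℕ => (N : ℝ) ^ (2*H - 1/2) * ∑ k ∈ Finset.range N, (δ N k)^2)
      atTop (𝓝 0) :=
  delta_sq_sum_tendsto_zero_general H hH Λ σ hσmeas hσbd δ hδ
end
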